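/- arXiv:2603.16182 — 3 statements merged into one kernel-verified Lean document; each statement's English description precedes it below -/
import Mathlib

section
/- For the multi-agent system ẋ_i = A x_i + B u_i, i = 1,...,N, with a communication graph admitting a directed spanning tree rooted at N whose root is also a root vertex of the original graph, the decentralized protocol u_N = 0, u_i = K_i w_{i,p(i)} (x_{p(i)} - x_i) for i < N achieves asymptotic state consensus (x_i(t) - x_j(t) → 0 for all i,j and all initial conditions), provided each matrix A - w_{i,p(i)} B K_i is Hurwitz, where p(i) is the parent of i in the spanning tree and w_{i,p(i)} > 0. -/
/-!
Along a tree edge the error `e i = x i - x (p i)` obeys `ė = (A - w B K i) e - B u_{p i}`, where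
the input `u_{p i}` of the parent is `0` at the root and otherwise a multiple of the error on the
parent's own edge. A Hurwitz system driven by a vanishing input tends to zero, so by downward
induction along `p` every edge error vanishes, and telescoping along tree paths gives consensus.

That a Hurwitz system `ẏ = M y + f` with `f → 0` has `y → 0` is proved over `ℂ` by induction
on the dimension: for a left eigenvector `w` of `M` with eigenvalue `μ`, the scalar `w ⬝ᵥ y` obeys
`ż = μ z + w ⬝ᵥ f` and is handled by a comparison estimate, while the remaining coordinates obey
an equation whose matrix is a deflation of `M`, with spectrum contained in that of `M`.
-/

open Filter

/-- A real square matrix is Hurwitz if every complex eigenvalue has negative real part. -/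
def IsHurwitzR {ι : Type*} [Fintype ι] [DecidableEq ι] (M : Matrix ι ι ℝ) : Prop :=
  ∀ μ ∈ spectrum ℂ (M.map (Complex.ofReal ·)), μ.re < 0

open Topology Matrix

theorem norm_le_of_hasDerivAt_mul_add {a : ℂ} (ha : a.re < 0) {g y : ℝ → ℂ} {T δ : ℝ}
    (hy : ∀ t, HasDerivAt y (a * y t + g t) t) (hg : ∀ s ≥ T, ‖g s‖ ≤ δ) {t : ℝ} (ht : T ≤ t) :
    ‖y t‖ ≤ Real.exp (a.re * (t - T)) * ‖y T‖ + δ / -a.re := by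
  set r := -a.re with hr_def
  have hr : 0 < r := neg_pos.2 ha
  have hδ : 0 ≤ δ := (norm_nonneg _).trans (hg T le_rfl)
  set E : ℝ → ℂ := fun s => Complex.exp (-a * (s - T))
  have hE : ∀ s, HasDerivAt E (-a * E s) s := fun s => by
    have := ((hasDerivAt_id (s : ℂ)).sub_const (T : ℂ)).const_mul (-a) |>.cexp
    simpa [E, mul_comm] using this.comp_ofReal
  have hnormE : ∀ s, ‖E s‖ = Real.exp (r * (s - T)) := fun s => by
    simp [E, Complex.norm_exp, hr_def]
  -- Fencing: `E * y` has derivative `E * g`, dominated in norm by the derivative of the bound.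
  have hu : ∀ s, HasDerivAt (fun s => E s * y s) (E s * g s) s := fun s =>
    ((hE s).mul (hy s)).congr_deriv (by ring)
  have hB : ∀ s, HasDerivAt (fun s => ‖y T‖ + δ * (Real.exp (r * (s - T)) - 1) / r)
      (δ * Real.exp (r * (s - T))) s := fun s => by
    refine (((hasDerivAt_id s).sub_const T).const_mul r).exp.sub_const 1 |>.const_mul δ
      |>.div_const r |>.const_add ‖y T‖ |>.congr_deriv ?_
    field_simp
    rfl
  have hbound := image_norm_le_of_norm_deriv_right_le_deriv_boundary (a := T) (b := t)
    (f := fun s => E s * y s) (fun s _ => (hu s).continuousAt.continuousWithinAt)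
    (fun s _ => (hu s).hasDerivWithinAt) (by simp [E]) hB
    (fun s hs => by
      rw [norm_mul, hnormE, mul_comm]
      exact mul_le_mul_of_nonneg_right (hg s hs.1) (Real.exp_nonneg _)) ⟨ht, le_rfl⟩
  rw [norm_mul, hnormE] at hbound
  have hexp : Real.exp (a.re * (t - T)) * Real.exp (r * (t - T)) = 1 := by
    rw [← Real.exp_add, hr_def]; simp
  calc ‖y t‖ = Real.exp (a.re * (t - T)) * (Real.exp (r * (t - T)) * ‖y t‖) := by
        rw [← mul_assoc, hexp, one_mul]
    _ ≤ Real.exp (a.re * (t - T)) * (‖y T‖ + δ * (Real.exp (r * (t - T)) - 1) / r) := by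
        gcongr
    _ = Real.exp (a.re * (t - T)) * ‖y T‖ + δ / r - Real.exp (a.re * (t - T)) * δ / r := by
        linear_combination (δ / r) * hexp
    _ ≤ Real.exp (a.re * (t - T)) * ‖y T‖ + δ / r := by
        have : 0 ≤ Real.exp (a.re * (t - T)) * δ / r := by positivity
        linarith

theorem tendsto_zero_of_hasDerivAt_mul_add {a : ℂ} (ha : a.re < 0) {g y : ℝ → ℂ}
    (hg : Tendsto g atTop (𝓝 0)) (hy : ∀ t, HasDerivAt y (a * y t + g t) t) :
    Tendsto y atTop (𝓝 0) := by
  rw [Metric.tendsto_atTop]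
  intro ε hε
  have hr : 0 < -a.re := neg_pos.2 ha
  obtain ⟨T, hT⟩ := eventually_atTop.1 <|
    (tendsto_norm_zero.comp hg).eventually (ge_mem_nhds (by positivity : 0 < -a.re * ε / 2))
  have hdecay : Tendsto (fun t => Real.exp (a.re * (t - T)) * ‖y T‖) atTop (𝓝 0) := by
    have := (Real.tendsto_exp_atBot.comp <|
      (tendsto_atTop_add_const_right _ (-T) tendsto_id).const_mul_atTop_of_neg ha).mul_const ‖y T‖
    simpa [sub_eq_add_neg, Function.comp_def] using this
  obtain ⟨T', hT'⟩ := eventually_atTop.1 (hdecay.eventually (gt_mem_nhds (half_pos hε)))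
  refine ⟨max T T', fun t ht => ?_⟩
  rw [dist_zero_right]
  calc ‖y t‖ ≤ Real.exp (a.re * (t - T)) * ‖y T‖ + -a.re * ε / 2 / -a.re :=
        norm_le_of_hasDerivAt_mul_add ha hy hT (le_of_max_le_left ht)
    _ < ε / 2 + ε / 2 := by
        have : -a.re * ε / 2 / -a.re = ε / 2 := by field_simp [ha.ne]
        linarith [hT' t (le_of_max_le_right ht)]
    _ = ε := add_halves ε

namespace Matrix

variable {K ι : Type*} [Field K] [Fintype ι] [DecidableEq ι]

theorem mem_spectrum_iff_exists_mulVec_eq_smul {M : Matrix ι ι K} {μ : K} :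
    μ ∈ spectrum K M ↔ ∃ v ≠ 0, M *ᵥ v = μ • v := by
  rw [← spectrum_toLin', ← Module.End.hasEigenvalue_iff_mem_spectrum,
    Module.End.hasEigenvalue_iff, Submodule.ne_bot_iff]
  simp only [Module.End.mem_eigenspace_iff, toLin'_apply, and_comm]

theorem spectrum_transpose (M : Matrix ι ι K) : spectrum K Mᵀ = spectrum K M := by
  ext μ
  simp [mem_spectrum_iff_isRoot_charpoly, charpoly_transpose]

theorem exists_vecMul_eq_smul [IsAlgClosed K] [Nonempty ι] (M : Matrix ι ι K) :
    ∃ μ ∈ spectrum K M, ∃ (w : ι → K) (k : ι), w k = 1 ∧ w ᵥ* M = μ • w := by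
  obtain ⟨μ, hμ⟩ := Module.End.exists_eigenvalue (toLin' Mᵀ)
  rw [Module.End.hasEigenvalue_iff_mem_spectrum, spectrum_toLin', spectrum_transpose] at hμ
  obtain ⟨v, hv, hMv⟩ := mem_spectrum_iff_exists_mulVec_eq_smul.1 (spectrum_transpose M ▸ hμ)
  obtain ⟨k, hk⟩ := Function.ne_iff.1 hv
  refine ⟨μ, hμ, (v k)⁻¹ • v, k, inv_mul_cancel₀ hk, ?_⟩
  rw [smul_vecMul, ← mulVec_transpose, hMv, smul_comm]

/-- If `w ᵥ* M = μ • w` with `w k = 1`, then in the coordinates `(w ⬝ᵥ v, v|_{l ≠ k})` the matrix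
`M` is block triangular with diagonal blocks `μ` and `M.deflate w k`. -/
def deflate (M : Matrix ι ι K) (w : ι → K) (k : ι) : Matrix {l // l ≠ k} {l // l ≠ k} K :=
  fun j l => M j l - M j k * w l

variable {M : Matrix ι ι K} {w : ι → K} {k : ι}

theorem dotProduct_eq_apply_add_dotProduct_ne (hwk : w k = 1) (v : ι → K) :
    w ⬝ᵥ v = v k + (fun l : {l // l ≠ k} => w l) ⬝ᵥ (fun l => v l) := by
  rw [dotProduct, Fintype.sum_eq_add_sum_subtype_ne _ k, hwk, one_mul, dotProduct]

theorem mulVec_apply_eq_deflate_mulVec_add (hwk : w k = 1) (v : ι → K) (j : {l // l ≠ k}) :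
    (M *ᵥ v) j = (M.deflate w k *ᵥ fun l => v l) j + M j k * (w ⬝ᵥ v) := by
  rw [dotProduct_eq_apply_add_dotProduct_ne hwk]
  simp only [mulVec, dotProduct, deflate]
  rw [Fintype.sum_eq_add_sum_subtype_ne _ k]
  simp only [sub_mul, Finset.sum_sub_distrib, Finset.mul_sum, mul_add, mul_assoc]
  ring

theorem spectrum_deflate_subset {μ : K} (hwk : w k = 1) (hwM : w ᵥ* M = μ • w) :
    spectrum K (M.deflate w k) ⊆ spectrum K M := by
  intro ν hν
  obtain ⟨v, hv, hDv⟩ := mem_spectrum_iff_exists_mulVec_eq_smul.1 hν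
  -- Extend `v` by the coordinate making `w ⬝ᵥ u = 0`: the rows `≠ k` of `M *ᵥ u = ν • u` are
  -- `hDv`, and row `k` follows from them because `w` is a left eigenvector.
  set u : ι → K := fun l => if h : l = k then -((fun j : {l // l ≠ k} => w j) ⬝ᵥ v) else v ⟨l, h⟩
  have hu_ne : ∀ j : {l // l ≠ k}, u j = v j := fun j => dif_neg j.2
  have hwu : w ⬝ᵥ u = 0 := by
    rw [dotProduct_eq_apply_add_dotProduct_ne hwk]
    simp [u, hu_ne]
  have hMu_ne : ∀ j : {l // l ≠ k}, (M *ᵥ u - ν • u) j = 0 := fun j => by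
    simp [mulVec_apply_eq_deflate_mulVec_add hwk, hDv, hwu, hu_ne]
  have hMu : M *ᵥ u = ν • u := by
    rw [← sub_eq_zero]
    have hk : w ⬝ᵥ (M *ᵥ u - ν • u) = 0 := by
      rw [dotProduct_sub, dotProduct_mulVec, hwM, smul_dotProduct, dotProduct_smul, hwu]
      simp
    rw [dotProduct_eq_apply_add_dotProduct_ne hwk] at hk
    funext l
    by_cases hl : l = k
    · subst hl; simpa [hMu_ne] using hk
    · exact hMu_ne ⟨l, hl⟩
  refine mem_spectrum_iff_exists_mulVec_eq_smul.2 ⟨u, fun hu0 => hv (funext fun j => ?_), hMu⟩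
  rw [← hu_ne, hu0]; rfl

end Matrix

theorem HasDerivAt.const_dotProduct {𝕜 𝔸 ι : Type*} [NontriviallyNormedField 𝕜] [NormedRing 𝔸]
    [NormedAlgebra 𝕜 𝔸] [Fintype ι] {y : 𝕜 → ι → 𝔸} {y' : ι → 𝔸} {t : 𝕜} (w : ι → 𝔸)
    (hy : HasDerivAt y y' t) :
    HasDerivAt (fun s => w ⬝ᵥ y s) (w ⬝ᵥ y') t :=
  HasDerivAt.fun_sum fun l _ => (hasDerivAt_pi.1 hy l).const_mul (w l)

theorem Filter.Tendsto.const_dotProduct {α R n : Type*} [Fintype n] [NonUnitalNonAssocSemiring R]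
    [TopologicalSpace R] [IsTopologicalSemiring R] {l : Filter α} {v : α → n → R} {v₀ : n → R}
    (w : n → R) (hv : Tendsto v l (𝓝 v₀)) :
    Tendsto (fun a => w ⬝ᵥ v a) l (𝓝 (w ⬝ᵥ v₀)) :=
  ((continuous_const.dotProduct continuous_id).tendsto v₀).comp hv

theorem Filter.Tendsto.const_mulVec {α R m n : Type*} [Fintype n] [NonUnitalNonAssocSemiring R]
    [TopologicalSpace R] [IsTopologicalSemiring R] {l : Filter α} {v : α → n → R} {v₀ : n → R}
    (M : Matrix m n R) (hv : Tendsto v l (𝓝 v₀)) :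
    Tendsto (fun a => M *ᵥ v a) l (𝓝 (M *ᵥ v₀)) :=
  ((continuous_const.matrix_mulVec continuous_id).tendsto v₀).comp hv

theorem tendsto_zero_of_hasDerivAt_mulVec_add {ι : Type*} [Fintype ι] [DecidableEq ι]
    {M : Matrix ι ι ℂ} (hM : ∀ μ ∈ spectrum ℂ M, μ.re < 0) {f y : ℝ → ι → ℂ}
    (hf : Tendsto f atTop (𝓝 0)) (hy : ∀ t, HasDerivAt y (M *ᵥ y t + f t) t) :
    Tendsto y atTop (𝓝 0) := by
  induction h : Fintype.card ι generalizing ι with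
  | zero =>
    have := Fintype.card_eq_zero_iff.1 h
    exact tendsto_pi_nhds.2 fun i => isEmptyElim i
  | succ d ih =>
    have : Nonempty ι := Fintype.card_pos_iff.1 (by omega)
    obtain ⟨μ, hμ, w, k, hwk, hwM⟩ := M.exists_vecMul_eq_smul
    set z : ℝ → ℂ := fun t => w ⬝ᵥ y t
    have hz : Tendsto z atTop (𝓝 0) := by
      refine tendsto_zero_of_hasDerivAt_mul_add (hM μ hμ) (by simpa using hf.const_dotProduct w)
        fun t => ((hy t).const_dotProduct w).congr_deriv ?_
      rw [dotProduct_add, dotProduct_mulVec, hwM, smul_dotProduct, smul_eq_mul]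
    set Y : ℝ → {l // l ≠ k} → ℂ := fun t l => y t l
    have hY : Tendsto Y atTop (𝓝 0) := by
      refine ih (fun ν hν => hM ν (spectrum_deflate_subset hwk hwM hν))
        (f := fun t j => M j k * z t + f t j) ?_ (fun t => hasDerivAt_pi.2 fun j => ?_) ?_
      · refine tendsto_pi_nhds.2 fun j => ?_
        simpa using (hz.const_mul (M j k)).add (tendsto_pi_nhds.1 hf j)
      · convert hasDerivAt_pi.1 (hy t) j using 1
        simp only [Pi.add_apply, mulVec_apply_eq_deflate_mulVec_add hwk, Y, z]
        ring
      · simp [Fintype.card_subtype_compl, h]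
    refine tendsto_pi_nhds.2 fun l => ?_
    by_cases hl : l = k
    · have hyk : ∀ t, y t l = z t - (fun j : {l // l ≠ k} => w j) ⬝ᵥ Y t := fun t => by
        rw [hl, show z t = w ⬝ᵥ y t from rfl, dotProduct_eq_apply_add_dotProduct_ne hwk]; ring
      simpa [hyk] using hz.sub (hY.const_dotProduct _)
    · exact tendsto_pi_nhds.1 hY ⟨l, hl⟩

theorem IsHurwitzR.tendsto_zero_of_hasDerivAt_mulVec_add {ι : Type*} [Fintype ι] [DecidableEq ι]
    {M : Matrix ι ι ℝ} (hM : IsHurwitzR M) {f y : ℝ → ι → ℝ}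
    (hf : Tendsto f atTop (𝓝 0)) (hy : ∀ t, HasDerivAt y (M *ᵥ y t + f t) t) :
    Tendsto y atTop (𝓝 0) := by
  have hyℂ : Tendsto (fun t i => (y t i : ℂ)) atTop (𝓝 0) := by
    refine _root_.tendsto_zero_of_hasDerivAt_mulVec_add hM (f := fun t i => (f t i : ℂ))
      (tendsto_pi_nhds.2 fun i => ?_) fun t => hasDerivAt_pi.2 fun i => ?_
    · simpa [Function.comp_def] using
        (Complex.continuous_ofReal.tendsto 0).comp (tendsto_pi_nhds.1 hf i)
    · refine (hasDerivAt_pi.1 (hy t) i).ofReal_comp.congr_deriv ?_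
      simp [mulVec, dotProduct]
  refine tendsto_pi_nhds.2 fun i => ?_
  simpa [Function.comp_def] using (Complex.continuous_re.tendsto 0).comp (tendsto_pi_nhds.1 hyℂ i)

theorem hasDerivAt_sub_of_relative_feedback {ι κ : Type*} [Fintype ι] [Fintype κ]
    {A : Matrix ι ι ℝ} {B : Matrix ι κ ℝ} {K : Matrix κ ι ℝ} {c t : ℝ} {x₁ x₂ : ℝ → ι → ℝ}
    {u₂ : κ → ℝ} (h₁ : HasDerivAt x₁ (A *ᵥ x₁ t + B *ᵥ (K *ᵥ (c • (x₂ t - x₁ t)))) t)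
    (h₂ : HasDerivAt x₂ (A *ᵥ x₂ t + B *ᵥ u₂) t) :
    HasDerivAt (fun s => x₁ s - x₂ s) ((A - c • (B * K)) *ᵥ (x₁ t - x₂ t) + -(B *ᵥ u₂)) t := by
  refine (h₁.sub h₂).congr_deriv ?_
  simp only [sub_mulVec, smul_mulVec, ← mulVec_mulVec, mulVec_smul, mulVec_sub]
  module

theorem tendsto_sub_of_tendsto_sub_parent {α E : Type*} [AddCommGroup E] [TopologicalSpace E]
    [IsTopologicalAddGroup E] {l : Filter α} {N : ℕ} {p : Fin N → Fin (N + 1)}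
    (hp : ∀ i, i.castSucc < p i) {x : Fin (N + 1) → α → E}
    (hedge : ∀ i, Tendsto (fun t => x i.castSucc t - x (p i) t) l (𝓝 0)) (i j : Fin (N + 1)) :
    Tendsto (fun t => x i t - x j t) l (𝓝 0) := by
  have hroot : ∀ v, Tendsto (fun t => x v t - x (Fin.last N) t) l (𝓝 0) := by
    intro v
    induction v using WellFoundedGT.induction with | _ v ih =>
    cases v using Fin.lastCases with
    | last => simpa using tendsto_const_nhds
    | cast i => simpa using (hedge i).add (ih (p i) (hp i))
  simpa using (hroot i).sub (hroot j)

theorem stmt6_general {N n m : ℕ}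
    (A : Matrix (Fin n) (Fin n) ℝ) (B : Matrix (Fin n) (Fin m) ℝ)
    (w : Fin (N + 1) → Fin (N + 1) → ℝ)
    (p : Fin N → Fin (N + 1))
    (hp : ∀ i : Fin N, i.castSucc < p i)
    (K : Fin N → Matrix (Fin m) (Fin n) ℝ)
    (hHur : ∀ i : Fin N, IsHurwitzR (A - w i.castSucc (p i) • (B * K i)))
    (x : Fin (N + 1) → ℝ → (Fin n → ℝ))
    (hroot : ∀ t, HasDerivAt (x (Fin.last N)) (A.mulVec (x (Fin.last N) t)) t)
    (hdyn : ∀ (i : Fin N) (t : ℝ),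
      HasDerivAt (x i.castSucc)
        (A.mulVec (x i.castSucc t) +
          B.mulVec ((K i).mulVec
            (w i.castSucc (p i) • (x (p i) t - x i.castSucc t)))) t) :
    ∀ i j : Fin (N + 1), Tendsto (fun t => x i t - x j t) atTop (nhds 0) := by
  let u : Fin (N + 1) → ℝ → Fin m → ℝ := Fin.lastCases (fun _ => 0)
    fun i t => K i *ᵥ (w i.castSucc (p i) • (x (p i) t - x i.castSucc t))
  have hx : ∀ v t, HasDerivAt (x v) (A *ᵥ x v t + B *ᵥ u v t) t := by
    intro v t
    cases v using Fin.lastCases with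
    | last => simpa [u] using hroot t
    | cast i => simpa [u] using hdyn i t
  refine tendsto_sub_of_tendsto_sub_parent hp fun i => ?_
  induction i using WellFoundedGT.induction with | _ i ih =>
  have hu : Tendsto (u (p i)) atTop (𝓝 0) := by
    obtain ⟨j, hj⟩ | hpi := Fin.eq_castSucc_or_eq_last (p i)
    · have hij : i < j := by simpa [hj] using hp i
      rw [hj]
      simpa [u] using (((ih j hij).neg.const_smul (w j.castSucc (p j))).const_mulVec (K j))
    · simp [u, hpi]
  refine (hHur i).tendsto_zero_of_hasDerivAt_mulVec_add (by simpa using (hu.const_mulVec B).neg)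
    fun t => hasDerivAt_sub_of_relative_feedback (hdyn i t) (hx (p i) t)

/-- Agents `x i`, `i : Fin (N+1)`, have identical linear dynamics
`ẋ_i = A x_i + B u_i`.  The communication graph has nonnegative weights `w` and admits a
directed spanning tree rooted at the last vertex, with parent map `p` satisfying
`p i > i` and tree edge weights `w i (p i) > 0`; the root of the tree is also a root
vertex of the graph (it can reach every vertex along graph edges).  Under the
decentralized protocol `u_root = 0`, `u_i = K_i w_{i,p(i)} (x_{p(i)} - x_i)`, if each
`A - w_{i,p(i)} B K_i` is Hurwitz then the system achieves asymptotic state consensus: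
`x_i(t) - x_j(t) → 0` for all `i, j` and all initial conditions. -/
theorem stmt6 {N n m : ℕ}
    (A : Matrix (Fin n) (Fin n) ℝ) (B : Matrix (Fin n) (Fin m) ℝ)
    (w : Fin (N + 1) → Fin (N + 1) → ℝ) (hw : ∀ i j, 0 ≤ w i j)
    (p : Fin N → Fin (N + 1))
    (hp : ∀ i : Fin N, i.castSucc < p i)
    (hwt : ∀ i : Fin N, 0 < w i.castSucc (p i))
    (hrootgraph : ∀ v : Fin (N + 1), v ≠ Fin.last N →
      ∃ (L : ℕ) (path : ℕ → Fin (N + 1)), path 0 = Fin.last N ∧ path L = v ∧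
        ∀ l < L, 0 < w (path (l + 1)) (path l))
    (K : Fin N → Matrix (Fin m) (Fin n) ℝ)
    (hHur : ∀ i : Fin N, IsHurwitzR (A - w i.castSucc (p i) • (B * K i)))
    (x : Fin (N + 1) → ℝ → (Fin n → ℝ))
    (hroot : ∀ t, HasDerivAt (x (Fin.last N)) (A.mulVec (x (Fin.last N) t)) t)
    (hdyn : ∀ (i : Fin N) (t : ℝ),
      HasDerivAt (x i.castSucc)
        (A.mulVec (x i.castSucc t) +
          B.mulVec ((K i).mulVec
            (w i.castSucc (p i) • (x (p i) t - x i.castSucc t)))) t) :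
    ∀ i j : Fin (N + 1), Tendsto (fun t => x i t - x j t) atTop (nhds 0) :=
  stmt6_general A B w p hp K hHur x hroot hdyn
end

section
/- Block Gershgorin theorem: let M be a complex matrix partitioned into n×n blocks M_{ij}, i,j = 1,...,k, with each diagonal block M_{ii}. Then every eigenvalue λ of M satisfies, for at least one index i, either λ is an eigenvalue of M_{ii}, or ||(M_{ii} - λI)^{-1}||^{-1} ≤ Σ_{j≠i} ||M_{ij}||, where ||·|| is the operator norm induced by a fixed vector norm on C^n. -/
/-!
If `M v = λ v` with `v ≠ 0`, pick a block index `i` at which the sup norm of `v` is attained.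
Row block `i` of the eigen-equation reads `(M_ii - λ) v_i = -∑_{j ≠ i} M_ij v_j`, so
`‖(M_ii - λ)⁻¹‖⁻¹ ‖v‖ ≤ ‖(M_ii - λ) v_i‖ ≤ (∑_{j ≠ i} ‖M_ij‖) ‖v‖`, and `‖v‖ > 0` gives the bound.
-/

/-- The operator norm on `n×n` complex matrices induced by the `ℓ∞` vector norm:
the maximal absolute row sum. -/
noncomputable def mnorm {n : ℕ} (A : Matrix (Fin n) (Fin n) ℂ) : ℝ :=
  ⨆ i : Fin n, ∑ j : Fin n, ‖A i j‖

/-- `‖A⁻¹‖⁻¹`, with the convention that it is `0` when `A` is singular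
(Mathlib's matrix inverse is `0` on singular matrices, and `(0:ℝ)⁻¹ = 0`). -/
noncomputable def mlow {n : ℕ} (A : Matrix (Fin n) (Fin n) ℂ) : ℝ :=
  (mnorm A⁻¹)⁻¹

open Matrix

attribute [local instance] Matrix.linftyOpNormedAddCommGroup

lemma Matrix.exists_mulVec_eq_smul_of_mem_spectrum {K ι : Type*} [Field K] [Fintype ι]
    [DecidableEq ι] {A : Matrix ι ι K} {μ : K} (h : μ ∈ spectrum K A) :
    ∃ v ≠ 0, A *ᵥ v = μ • v := by
  rw [← spectrum_toLin', ← Module.End.hasEigenvalue_iff_mem_spectrum] at h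
  obtain ⟨v, hv⟩ := h.exists_hasEigenvector
  exact ⟨v, hv.2, by simpa using hv.apply_eq_smul⟩

lemma mnorm_eq_linfty_opNorm {n : ℕ} (A : Matrix (Fin n) (Fin n) ℂ) : mnorm A = ‖A‖ := by
  simp [linfty_opNorm_def, mnorm, Finset.sup_univ_eq_ciSup, NNReal.coe_iSup]

lemma mnorm_nonneg {n : ℕ} (A : Matrix (Fin n) (Fin n) ℂ) : 0 ≤ mnorm A :=
  mnorm_eq_linfty_opNorm A ▸ norm_nonneg A

-- For singular `A` both `A⁻¹` and `mlow A` are `0`, so the inequality holds for every `A`.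
lemma mlow_mul_norm_le_norm_mulVec {n : ℕ} (A : Matrix (Fin n) (Fin n) ℂ) (x : Fin n → ℂ) :
    mlow A * ‖x‖ ≤ ‖A *ᵥ x‖ := by
  by_cases hA : IsUnit A.det
  · refine inv_mul_le_of_le_mul₀ (mnorm_nonneg _) (norm_nonneg _) ?_
    calc ‖x‖ = ‖A⁻¹ *ᵥ (A *ᵥ x)‖ := by rw [mulVec_mulVec, nonsing_inv_mul A hA, one_mulVec]
      _ ≤ mnorm A⁻¹ * ‖A *ᵥ x‖ := mnorm_eq_linfty_opNorm A⁻¹ ▸ linfty_opNorm_mulVec _ _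
  · rw [mlow, nonsing_inv_apply_not_isUnit A hA, mnorm_eq_linfty_opNorm, norm_zero,
      _root_.inv_zero, zero_mul]
    exact norm_nonneg _

lemma mulVec_diagBlock_sub_smul_eq_neg_sum {R ι m : Type*} [CommRing R] [Fintype ι]
    [DecidableEq ι] [Fintype m] [DecidableEq m] {M : Matrix (ι × m) (ι × m) R} {v : ι × m → R}
    {μ : R} (hv : M *ᵥ v = μ • v) (i : ι) :
    (of (fun a b => M (i, a) (i, b)) - μ • 1) *ᵥ (fun b => v (i, b)) =
      -∑ j ∈ Finset.univ.erase i, of (fun a b => M (i, a) (j, b)) *ᵥ fun b => v (j, b) := by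
  ext a
  have hrow : ∑ j, (of (fun a b => M (i, a) (j, b)) *ᵥ fun b => v (j, b)) a = μ * v (i, a) := by
    simpa [mulVec, dotProduct, Fintype.sum_prod_type] using congrFun hv (i, a)
  rw [← Finset.add_sum_erase _ _ (Finset.mem_univ i)] at hrow
  simp only [sub_mulVec, smul_mulVec, one_mulVec, Pi.sub_apply, Pi.smul_apply, Pi.neg_apply,
    Finset.sum_apply, smul_eq_mul]
  linear_combination hrow

section BlockNorm

variable {ι m E : Type*} [Fintype ι] [Fintype m] [SeminormedAddCommGroup E]

lemma norm_block_le (v : ι × m → E) (j : ι) : ‖fun b => v (j, b)‖ ≤ ‖v‖ :=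
  (pi_norm_le_iff_of_nonneg (norm_nonneg v)).2 fun b => norm_le_pi_norm v (j, b)

lemma exists_norm_block_eq [Nonempty (ι × m)] (v : ι × m → E) :
    ∃ i, ‖fun b => v (i, b)‖ = ‖v‖ := by
  obtain ⟨p, hp⟩ := Finite.exists_max fun q => ‖v q‖
  refine ⟨p.1, (norm_block_le v p.1).antisymm ?_⟩
  calc ‖v‖ ≤ ‖v p‖ := (pi_norm_le_iff_of_nonneg (norm_nonneg _)).2 hp
    _ ≤ ‖fun b => v (p.1, b)‖ := norm_le_pi_norm (fun b => v (p.1, b)) p.2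

end BlockNorm

lemma mlow_diagBlock_sub_smul_le {ι : Type*} [Fintype ι] [DecidableEq ι] {n : ℕ}
    {M : Matrix (ι × Fin n) (ι × Fin n) ℂ} {v : ι × Fin n → ℂ} {μ : ℂ} (hv : M *ᵥ v = μ • v)
    (hv0 : v ≠ 0) {i : ι} (hi : ‖fun b => v (i, b)‖ = ‖v‖) :
    mlow (of (fun a b => M (i, a) (i, b)) - μ • 1) ≤
      ∑ j ∈ Finset.univ.erase i, mnorm (fun a b : Fin n => M (i, a) (j, b)) := by
  refine le_of_mul_le_mul_right ?_ (norm_pos_iff.2 hv0)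
  calc mlow (of (fun a b => M (i, a) (i, b)) - μ • 1) * ‖v‖
      ≤ ‖(of (fun a b => M (i, a) (i, b)) - μ • 1) *ᵥ fun b => v (i, b)‖ :=
        hi ▸ mlow_mul_norm_le_norm_mulVec _ _
    _ = ‖∑ j ∈ Finset.univ.erase i, of (fun a b => M (i, a) (j, b)) *ᵥ fun b => v (j, b)‖ := by
        rw [mulVec_diagBlock_sub_smul_eq_neg_sum hv, norm_neg]
    _ ≤ ∑ j ∈ Finset.univ.erase i, mnorm (fun a b : Fin n => M (i, a) (j, b)) * ‖v‖ := by
        refine (norm_sum_le _ _).trans (Finset.sum_le_sum fun j _ => ?_)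
        refine (linfty_opNorm_mulVec _ _).trans ?_
        rw [← mnorm_eq_linfty_opNorm]
        exact mul_le_mul_of_nonneg_left (norm_block_le v j) (mnorm_nonneg _)
    _ = _ := (Finset.sum_mul _ _ _).symm

/-- **block Gershgorin theorem.** Let `M` be a complex matrix partitioned
into `n×n` blocks `M_{ij}`, `i, j : Fin k`.  Every eigenvalue `λ` of `M` satisfies, for
at least one index `i`, either `λ` is an eigenvalue of the diagonal block `M_{ii}`, or
`‖(M_{ii} - λI)⁻¹‖⁻¹ ≤ Σ_{j ≠ i} ‖M_{ij}‖`. -/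
theorem stmt9 {k n : ℕ} (M : Matrix (Fin k × Fin n) (Fin k × Fin n) ℂ)
    (lam : ℂ) (hlam : lam ∈ spectrum ℂ M) :
    ∃ i : Fin k,
      lam ∈ spectrum ℂ (fun a b : Fin n => M (i, a) (i, b)) ∨
      mlow ((Matrix.of fun a b : Fin n => M (i, a) (i, b)) - lam • (1 : Matrix (Fin n) (Fin n) ℂ))
        ≤ ∑ j ∈ Finset.univ.erase i, mnorm (fun a b : Fin n => M (i, a) (j, b)) := by
  obtain ⟨v, hv0, hv⟩ := exists_mulVec_eq_smul_of_mem_spectrum hlam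
  have : Nonempty (Fin k × Fin n) := (Function.ne_iff.1 hv0).nonempty
  obtain ⟨i, hi⟩ := exists_norm_block_eq v
  exact ⟨i, Or.inr (mlow_diagBlock_sub_smul_le hv hv0 hi)⟩
end

section
/- The multi-agent system ẋ_i = A x_i + B u_i with distributed protocol u_i = K_i Σ_{j∈N_i} w_{ij}(x_j - x_i) achieves asymptotic state consensus if and only if the corresponding closed-loop fundamental edge state system ẏ = [I_{N-1} ⊗ A + Σ_{i=1}^N (p_i w_i Γ_i) ⊗ (B K_i)] y is asymptotically stable, where y is the vector of fundamental edge states with respect to a directed spanning tree of the communication graph. -/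
/-!
Along the spanning tree, the fundamental edge states `y_k = x_{p k} - x_k` determine all node
states once the root state is known (`SpanningTree.nodeStates`), and every `x_i - x_root` is a
signed sum of edge states along the path to the root; so consensus is the same as all edge
states tending to `0`. Differentiating the edge states of a closed-loop trajectory gives a
solution of `ẏ = M y`, because agent `i`'s input depends on the neighbours only through the
edge states. Conversely, a solution `y` of `ẏ = M y` lifts to a closed-loop trajectory: solve
the root's equation `ż = A z + B K_root u_root(y)` and descend along the tree.
-/

open Kronecker Filter Matrix Topology

theorem exists_forall_hasDerivAt_linear_add {F : Type*} [NormedAddCommGroup F] [NormedSpace ℝ F]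
    [CompleteSpace F] (L : F →L[ℝ] F) {f : ℝ → F} (hf : Continuous f) :
    ∃ z : ℝ → F, ∀ t, HasDerivAt z (L (z t) + f t) t := by
  -- variation of constants: `z t = exp (t L) ∫₀ᵗ exp (-s L) f s ds`
  set E : ℝ → F →L[ℝ] F := fun t => NormedSpace.exp (t • L)
  have hE : ∀ t, HasDerivAt E (L * E t) t := hasDerivAt_exp_smul_const' L
  have hE_inv : ∀ t, E t * E (-t) = 1 := fun t => by
    have h := NormedSpace.expSeries_radius_eq_top ℝ (F →L[ℝ] F)
    rw [← NormedSpace.exp_add_of_commute_of_mem_ball (𝕂 := ℝ)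
      ((Commute.refl L).smul_left t |>.smul_right (-t)) (h ▸ edist_lt_top _ _)
      (h ▸ edist_lt_top _ _), ← add_smul, add_neg_cancel, zero_smul, NormedSpace.exp_zero]
  have hg : Continuous fun s => E (-s) (f s) :=
    (continuous_iff_continuousAt.2 fun t => (hE t).continuousAt).comp continuous_neg
      |>.clm_apply hf
  refine ⟨fun t => E t (∫ s in (0 : ℝ)..t, E (-s) (f s)), fun t => ?_⟩
  convert (hE t).clm_apply (intervalIntegral.integral_hasDerivAt_right
    (hg.intervalIntegrable _ _) (hg.stronglyMeasurableAtFilter _ _) hg.continuousAt) using 1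
  have hinv : E t (E (-t) (f t)) = f t := congrArg (· (f t)) (hE_inv t)
  rw [hinv]
  rfl

namespace SpanningTree

variable {N : ℕ} (p : Fin N → Fin (N + 1))

theorem induction (hp : ∀ k : Fin N, k.castSucc < p k) {P : Fin (N + 1) → Prop}
    (root : P (Fin.last N)) (step : ∀ k, P (p k) → P k.castSucc) (i : Fin (N + 1)) : P i := by
  by_cases h : (i : ℕ) < N
  · exact step ⟨i, h⟩ (induction hp root step (p ⟨i, h⟩))
  · rwa [show i = Fin.last N from Fin.ext (by have := i.isLt; simp; omega)]
termination_by N - (i : ℕ)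
decreasing_by have := hp ⟨i, h⟩; simp only [Fin.lt_def, Fin.val_castSucc] at this; omega

theorem tendsto_sub_last (hp : ∀ k : Fin N, k.castSucc < p k) {E : Type*} [AddCommGroup E]
    [TopologicalSpace E] [IsTopologicalAddGroup E]
    {α : Type*} {l : Filter α} {x : α → Fin (N + 1) → E}
    (h : ∀ k, Tendsto (fun a => x a (p k) - x a k.castSucc) l (𝓝 0)) (i : Fin (N + 1)) :
    Tendsto (fun a => x a i - x a (Fin.last N)) l (𝓝 0) := by
  induction i using induction p hp with
  | root => simpa using tendsto_const_nhds
  | step k ih => simpa using ih.sub (h k)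

/-- The node states determined by the root state `r` and the edge states
`e k = x (p k) - x k.castSucc`. -/
def nodeStates (hp : ∀ k : Fin N, k.castSucc < p k) {E : Type*} [Sub E] (r : E) (e : Fin N → E)
    (i : Fin (N + 1)) : E :=
  if h : (i : ℕ) < N then nodeStates hp r e (p ⟨i, h⟩) - e ⟨i, h⟩ else r
termination_by N - (i : ℕ)
decreasing_by have := hp ⟨i, h⟩; simp only [Fin.lt_def, Fin.val_castSucc] at this; omega

variable {p} (hp : ∀ k : Fin N, k.castSucc < p k) {E : Type*}

@[simp]
theorem nodeStates_last [Sub E] (r : E) (e : Fin N → E) :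
    nodeStates p hp r e (Fin.last N) = r := by
  rw [nodeStates]; simp

theorem nodeStates_castSucc [Sub E] (r : E) (e : Fin N → E) (k : Fin N) :
    nodeStates p hp r e k.castSucc = nodeStates p hp r e (p k) - e k := by
  rw [nodeStates, dif_pos (by simp)]
  rfl

theorem nodeStates_parent_sub [AddCommGroup E] (r : E) (e : Fin N → E) (k : Fin N) :
    nodeStates p hp r e (p k) - nodeStates p hp r e k.castSucc = e k := by
  rw [nodeStates_castSucc, sub_sub_cancel]

theorem nodeStates_map_add [AddCommGroup E] (φ : E →+ E) (g : Fin (N + 1) → E) (r : E)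
    (e : Fin N → E) (i : Fin (N + 1)) :
    nodeStates p hp (φ r + g (Fin.last N)) (fun k => φ (e k) + (g (p k) - g k.castSucc)) i
      = φ (nodeStates p hp r e i) + g i := by
  induction i using induction p hp with
  | root => simp
  | step k ih => rw [nodeStates_castSucc, ih, nodeStates_castSucc, map_sub]; abel

theorem hasDerivAt_nodeStates [NormedAddCommGroup E] [NormedSpace ℝ E] {r : ℝ → E} {r' : E}
    {e : ℝ → Fin N → E} {e' : Fin N → E} {t : ℝ} (hr : HasDerivAt r r' t)
    (he : ∀ k, HasDerivAt (fun t => e t k) (e' k) t) (i : Fin (N + 1)) :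
    HasDerivAt (fun t => nodeStates p hp (r t) (e t) i) (nodeStates p hp r' e' i) t := by
  induction i using induction p hp with
  | root => simpa using hr
  | step k ih => simpa only [nodeStates_castSucc] using ih.fun_sub (he k)

end SpanningTree

theorem kronecker_mulVec_apply {R ι ι' κ κ' : Type*} [CommSemiring R] [Fintype ι']
    [Fintype κ'] (P : Matrix ι ι' R) (Q : Matrix κ κ' R) (Y : ι' × κ' → R) (k : ι) (s : κ) :
    ((P ⊗ₖ Q) *ᵥ Y) (k, s) = (Q *ᵥ ∑ k', P k k' • Function.curry Y k') s := by
  simp only [Function.curry_apply, mulVec, dotProduct, kroneckerMap_apply,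
    Fintype.sum_prod_type, Finset.sum_apply, Pi.smul_apply, smul_eq_mul, Finset.mul_sum]
  rw [Finset.sum_comm]
  exact Finset.sum_congr rfl fun _ _ => Finset.sum_congr rfl fun _ _ => by ring

theorem hasDerivAt_iff_curry {ι κ : Type*} [Fintype ι] [Fintype κ] {y : ℝ → ι × κ → ℝ}
    {y' : ι × κ → ℝ} {t : ℝ} :
    HasDerivAt y y' t ↔
      ∀ k, HasDerivAt (fun t => Function.curry (y t) k) (Function.curry y' k) t := by
  simp only [hasDerivAt_pi, Prod.forall, Function.curry_apply]

theorem tendsto_iff_curry {ι κ α M : Type*} [TopologicalSpace M] [Zero M] {l : Filter α}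
    {y : α → ι × κ → M} : Tendsto y l (𝓝 0) ↔
      ∀ k, Tendsto (fun a => Function.curry (y a) k) l (𝓝 0) := by
  simp only [tendsto_pi_nhds, Prod.forall, Function.curry_apply, Pi.zero_apply]

section EdgeSystem

variable {N n m : ℕ} (A : Matrix (Fin n) (Fin n) ℝ) (B : Matrix (Fin n) (Fin m) ℝ)
  (w : Fin (N + 1) → Fin (N + 1) → ℝ) (p : Fin N → Fin (N + 1))
  (Γ : Fin (N + 1) → Fin (N + 1) → Fin N → ℝ) (K : Fin (N + 1) → Matrix (Fin m) (Fin n) ℝ)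

/-- Row `i` of the incidence matrix of the spanning tree, whose edge `k` joins `k.castSucc`
to its parent `p k`. -/
def incidenceRow (i : Fin (N + 1)) (k : Fin N) : ℝ :=
  if i = k.castSucc then -1 else if i = p k then 1 else 0

theorem sum_incidenceRow_smul {E : Type*} [AddCommGroup E] [Module ℝ E] {k : Fin N}
    (hk : k.castSucc ≠ p k) (v : Fin (N + 1) → E) :
    ∑ i, incidenceRow p i k • v i = v (p k) - v k.castSucc := by
  rw [Fintype.sum_eq_add _ _ hk fun i hi => by simp [incidenceRow, hi.1, hi.2]]
  simp [incidenceRow, hk.symm, sub_eq_neg_add]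

def edgeSystemMatrix : Matrix (Fin N × Fin n) (Fin N × Fin n) ℝ :=
  (1 : Matrix (Fin N) (Fin N) ℝ) ⊗ₖ A
    + ∑ i, vecMulVec (incidenceRow p i) (fun k => ∑ j, w i j * Γ i j k) ⊗ₖ (B * K i)

/-- The input `B K_i ∑_j w_ij (x_j - x_i)` of agent `i`, written in the edge states `e`
through the information flow matrix `Γ i`. -/
def edgeInput (i : Fin (N + 1)) (e : Fin N → Fin n → ℝ) : Fin n → ℝ :=
  (B * K i) *ᵥ ∑ k, (∑ j, w i j * Γ i j k) • e k

def agentField (x : Fin (N + 1) → Fin n → ℝ) (i : Fin (N + 1)) : Fin n → ℝ :=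
  A *ᵥ x i + B *ᵥ (K i *ᵥ ∑ j, w i j • (x j - x i))

theorem curry_edgeSystemMatrix_mulVec (Y : Fin N × Fin n → ℝ) {k : Fin N}
    (hk : k.castSucc ≠ p k) :
    Function.curry (edgeSystemMatrix A B w p Γ K *ᵥ Y) k
      = A *ᵥ Function.curry Y k
        + (edgeInput B w Γ K (p k) (Function.curry Y)
          - edgeInput B w Γ K k.castSucc (Function.curry Y)) := by
  ext s
  simp only [edgeSystemMatrix, add_mulVec, sum_mulVec, Function.curry_apply, Pi.add_apply,
    Finset.sum_apply, kronecker_mulVec_apply, one_apply, ite_smul, one_smul, zero_smul,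
    Finset.sum_ite_eq, Finset.mem_univ, if_true, vecMulVec_apply, mul_smul, ← Finset.smul_sum,
    mulVec_smul, Pi.smul_apply, sum_incidenceRow_smul p hk, edgeInput, Pi.sub_apply]

variable {w p Γ} in
theorem agentField_eq (hw : ∀ i j, 0 ≤ w i j)
    (hΓ : ∀ i j, 0 < w i j → ∀ x : Fin (N + 1) → ℝ,
      x j - x i = ∑ k, Γ i j k * (x (p k) - x k.castSucc))
    (x : Fin (N + 1) → Fin n → ℝ) (i : Fin (N + 1)) :
    agentField A B w K x i = A *ᵥ x i + edgeInput B w Γ K i (fun k => x (p k) - x k.castSucc) := by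
  have hterm : ∀ j, w i j • (x j - x i) = ∑ k, (w i j * Γ i j k) • (x (p k) - x k.castSucc) := by
    intro j
    rcases (hw i j).eq_or_lt with h | h
    · simp [← h]
    · ext s
      simp only [Pi.smul_apply, Pi.sub_apply, smul_eq_mul, Finset.sum_apply,
        hΓ i j h fun l => x l s, Finset.mul_sum, mul_assoc]
  rw [agentField, edgeInput, ← mulVec_mulVec, Finset.sum_congr rfl fun j _ => hterm j,
    Finset.sum_comm]
  simp only [Finset.sum_smul]

variable {A B w p Γ K}

theorem consensus_of_edgeSystem_stable (hp : ∀ k : Fin N, k.castSucc < p k)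
    (hw : ∀ i j, 0 ≤ w i j)
    (hΓ : ∀ i j, 0 < w i j → ∀ x : Fin (N + 1) → ℝ,
      x j - x i = ∑ k, Γ i j k * (x (p k) - x k.castSucc))
    (hstab : ∀ y : ℝ → (Fin N × Fin n → ℝ),
      (∀ t, HasDerivAt y (edgeSystemMatrix A B w p Γ K *ᵥ y t) t) → Tendsto y atTop (𝓝 0))
    {x : Fin (N + 1) → ℝ → Fin n → ℝ}
    (hx : ∀ i t, HasDerivAt (x i) (agentField A B w K (fun j => x j t) i) t) (i j : Fin (N + 1)) :
    Tendsto (fun t => x i t - x j t) atTop (𝓝 0) := by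
  set y : ℝ → Fin N × Fin n → ℝ := fun t => Function.uncurry fun k => x (p k) t - x k.castSucc t
  have hy : ∀ t, HasDerivAt y (edgeSystemMatrix A B w p Γ K *ᵥ y t) t := by
    refine fun t => hasDerivAt_iff_curry.2 fun k => ?_
    rw [curry_edgeSystemMatrix_mulVec _ _ _ _ _ _ _ (hp k).ne, Function.curry_uncurry]
    refine ((hx (p k) t).sub (hx k.castSucc t)).congr_deriv ?_
    rw [agentField_eq A B K hw hΓ, agentField_eq A B K hw hΓ, mulVec_sub]
    abel
  have hedge : ∀ k, Tendsto (fun t => x (p k) t - x k.castSucc t) atTop (𝓝 0) :=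
    tendsto_iff_curry.1 (hstab y hy)
  simpa using (SpanningTree.tendsto_sub_last p hp (x := fun t i => x i t) hedge i).sub
    (SpanningTree.tendsto_sub_last p hp (x := fun t i => x i t) hedge j)

theorem edgeSystem_stable_of_consensus (hp : ∀ k : Fin N, k.castSucc < p k)
    (hw : ∀ i j, 0 ≤ w i j)
    (hΓ : ∀ i j, 0 < w i j → ∀ x : Fin (N + 1) → ℝ,
      x j - x i = ∑ k, Γ i j k * (x (p k) - x k.castSucc))
    (hcons : ∀ x : Fin (N + 1) → ℝ → Fin n → ℝ,
      (∀ i t, HasDerivAt (x i) (agentField A B w K (fun j => x j t) i) t) →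
        ∀ i j, Tendsto (fun t => x i t - x j t) atTop (𝓝 0))
    {y : ℝ → Fin N × Fin n → ℝ} (hy : ∀ t, HasDerivAt y (edgeSystemMatrix A B w p Γ K *ᵥ y t) t) :
    Tendsto y atTop (𝓝 0) := by
  set e : ℝ → Fin N → Fin n → ℝ := fun t => Function.curry (y t)
  have he : Continuous fun t => edgeInput B w Γ K (Fin.last N) (e t) := by
    have hy : Continuous y := continuous_iff_continuousAt.2 fun t => (hy t).continuousAt
    have : ∀ k, Continuous fun t => e t k :=
      fun k => continuous_pi fun s => (continuous_apply (k, s)).comp hy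
    unfold edgeInput; fun_prop
  obtain ⟨z, hz⟩ := exists_forall_hasDerivAt_linear_add (mulVecLin A).toContinuousLinearMap he
  set x : Fin (N + 1) → ℝ → Fin n → ℝ := fun i t => SpanningTree.nodeStates p hp (z t) (e t) i
  have hedge : ∀ t k, x (p k) t - x k.castSucc t = e t k :=
    fun t => SpanningTree.nodeStates_parent_sub hp _ _
  have hx : ∀ i t, HasDerivAt (x i) (agentField A B w K (fun j => x j t) i) t := by
    intro i t
    have hder := SpanningTree.hasDerivAt_nodeStates hp (hz t) (hasDerivAt_iff_curry.1 (hy t)) i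
    refine hder.congr_deriv ?_
    have hMy : Function.curry (edgeSystemMatrix A B w p Γ K *ᵥ y t) = fun k =>
        A *ᵥ e t k + (edgeInput B w Γ K (p k) (e t) - edgeInput B w Γ K k.castSucc (e t)) :=
      funext fun k => curry_edgeSystemMatrix_mulVec A B w p Γ K (y t) (hp k).ne
    rw [agentField_eq A B K hw hΓ, funext (hedge t), hMy]
    exact SpanningTree.nodeStates_map_add hp (mulVecLin A).toAddMonoidHom
      (fun i => edgeInput B w Γ K i (e t)) (z t) (e t) i
  exact tendsto_iff_curry.2 fun k => (hcons x hx (p k) k.castSucc).congr (hedge · k)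

end EdgeSystem

theorem stmt12_general {N n m : ℕ}
    (A : Matrix (Fin n) (Fin n) ℝ) (B : Matrix (Fin n) (Fin m) ℝ)
    (w : Fin (N + 1) → Fin (N + 1) → ℝ) (hw : ∀ i j, 0 ≤ w i j)
    (p : Fin N → Fin (N + 1)) (hp : ∀ k : Fin N, k.castSucc < p k)
    (Γ : Fin (N + 1) → Fin (N + 1) → Fin N → ℝ)
    (hΓ : ∀ i j, 0 < w i j → ∀ x : Fin (N + 1) → ℝ,
      x j - x i = ∑ k, Γ i j k * (x (p k) - x k.castSucc))
    (K : Fin (N + 1) → Matrix (Fin m) (Fin n) ℝ) :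
    -- the `i`-th row of the incidence matrix of the spanning tree
    let pvec : Fin (N + 1) → Fin N → ℝ := fun i k =>
      if i = k.castSucc then -1 else if i = p k then 1 else 0
    -- closed-loop fundamental edge state system matrix
    let M : Matrix (Fin N × Fin n) (Fin N × Fin n) ℝ :=
      (1 : Matrix (Fin N) (Fin N) ℝ) ⊗ₖ A
        + ∑ i : Fin (N + 1),
            (Matrix.vecMulVec (pvec i) (fun k => ∑ j, w i j * Γ i j k)) ⊗ₖ (B * K i)
    -- consensus of all closed-loop trajectories ↔ asymptotic stability of edge system
    ((∀ x : Fin (N + 1) → ℝ → (Fin n → ℝ),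
        (∀ (i : Fin (N + 1)) (t : ℝ),
          HasDerivAt (x i)
            (A.mulVec (x i t) +
              B.mulVec ((K i).mulVec (∑ j, w i j • (x j t - x i t)))) t) →
        ∀ i j : Fin (N + 1), Tendsto (fun t => x i t - x j t) atTop (nhds 0))
      ↔
      (∀ y : ℝ → (Fin N × Fin n → ℝ),
        (∀ t, HasDerivAt y (M.mulVec (y t)) t) → Tendsto y atTop (nhds 0))) := by
  intro pvec M
  exact ⟨fun hcons _ hy => edgeSystem_stable_of_consensus hp hw hΓ hcons hy,
    fun hstab _ hx => consensus_of_edgeSystem_stable hp hw hΓ hstab hx⟩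

/-- The multi-agent system `ẋ_i = A x_i + B u_i` with distributed
protocol `u_i = K_i Σ_{j} w_{ij}(x_j - x_i)` achieves asymptotic state consensus if and
only if the closed-loop fundamental edge state system
`ẏ = [I_{N-1} ⊗ A + Σ_i (p_i w_i Γ_i) ⊗ (B K_i)] y` is asymptotically stable.  Here the
communication graph on `Fin (N+1)` has nonnegative weights `w` and admits a directed
spanning tree rooted at the last vertex with parent map `p` (edge weights positive,
`p k > k`), `pvec i` is the `i`-th row of the tree incidence matrix, and `Γ i` is the
information flow matrix of agent `i`: its `j`-th row (with entries in `{-1,0,1}`)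
expresses `x_j - x_i` in the fundamental edge states when `j` is a neighbor of `i` and
vanishes otherwise. -/
theorem stmt12 {N n m : ℕ}
    (A : Matrix (Fin n) (Fin n) ℝ) (B : Matrix (Fin n) (Fin m) ℝ)
    (w : Fin (N + 1) → Fin (N + 1) → ℝ) (hw : ∀ i j, 0 ≤ w i j)
    (p : Fin N → Fin (N + 1)) (hp : ∀ k : Fin N, k.castSucc < p k)
    (hwt : ∀ k : Fin N, 0 < w k.castSucc (p k))
    (Γ : Fin (N + 1) → Fin (N + 1) → Fin N → ℝ)
    (hΓval : ∀ i j k, Γ i j k = -1 ∨ Γ i j k = 0 ∨ Γ i j k = 1)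
    (hΓ : ∀ i j, 0 < w i j → ∀ x : Fin (N + 1) → ℝ,
      x j - x i = ∑ k, Γ i j k * (x (p k) - x k.castSucc))
    (hΓ0 : ∀ i j, w i j = 0 → Γ i j = 0)
    (K : Fin (N + 1) → Matrix (Fin m) (Fin n) ℝ) :
    -- the `i`-th row of the incidence matrix of the spanning tree
    let pvec : Fin (N + 1) → Fin N → ℝ := fun i k =>
      if i = k.castSucc then -1 else if i = p k then 1 else 0
    -- closed-loop fundamental edge state system matrix
    let M : Matrix (Fin N × Fin n) (Fin N × Fin n) ℝ :=
      (1 : Matrix (Fin N) (Fin N) ℝ) ⊗ₖ A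
        + ∑ i : Fin (N + 1),
            (Matrix.vecMulVec (pvec i) (fun k => ∑ j, w i j * Γ i j k)) ⊗ₖ (B * K i)
    -- consensus of all closed-loop trajectories ↔ asymptotic stability of edge system
    ((∀ x : Fin (N + 1) → ℝ → (Fin n → ℝ),
        (∀ (i : Fin (N + 1)) (t : ℝ),
          HasDerivAt (x i)
            (A.mulVec (x i t) +
              B.mulVec ((K i).mulVec (∑ j, w i j • (x j t - x i t)))) t) →
        ∀ i j : Fin (N + 1), Tendsto (fun t => x i t - x j t) atTop (nhds 0))
      ↔
      (∀ y : ℝ → (Fin N × Fin n → ℝ),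
        (∀ t, HasDerivAt y (M.mulVec (y t)) t) → Tendsto y atTop (nhds 0))) :=
  stmt12_general A B w hw p hp Γ hΓ K
end
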